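/- With Ã^{ℓk}_{(ij)(i'j')} defined by interchanging k and ℓ in A (i.e. Ã^{ℓk}_{(ij)(i'j')} = L₁δ^ℓ_kδ^i_{i'}δ^j_{j'} + ¼(L₂+L₃)(δ^j_{i'}δ^ℓ_iδ^k_{j'} + δ^i_{i'}δ^k_{j'}δ^ℓ_j + δ^i_ℓδ^{i'}_kδ^{j'}_j + δ^j_ℓδ^{i'}_kδ^{j'}_i − (4/3)δ^{i'}_{j'}δ^i_kδ^j_ℓ − (4/3)δ^i_jδ^{i'}_kδ^{j'}_ℓ + (4/9)δ^i_jδ^{i'}_{j'}δ^k_ℓ)), if L₂+L₃ ≥ 0 and L₁ > 0 then Ã^{ℓk}_{(ij)(i'j')} ξ^{(ij)}_ℓ ξ^{(i'j')}_k = L₁Σ|ξ^{(ij)}_ℓ|² + ¼(L₂+L₃)Σ_j |ξ^{(ij)}_i + ξ^{(ji)}_i − ⅔ξ^{(ii)}_j|² ≥ L₁Σ|ξ^{(ij)}_ℓ|² for all ξ ∈ ℝ^{3×3×3}. -/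
import Mathlib


open Matrix BigOperators Finset

noncomputable def eps (i j k : Fin 3) : ℝ :=
  (((i : ℕ) : ℝ) - ((j : ℕ) : ℝ)) * (((j : ℕ) : ℝ) - ((k : ℕ) : ℝ)) *
    (((k : ℕ) : ℝ) - ((i : ℕ) : ℝ)) / 2

noncomputable def kron (i j : Fin 3) : ℝ := if i = j then 1 else 0

noncomputable def Atilde (L1 L23 : ℝ) (l k i j i' j' : Fin 3) : ℝ :=
  L1 * kron l k * kron i i' * kron j j'
  + (1/4) * L23 *
      (kron j i' * kron l i * kron k j' + kron i i' * kron k j' * kron l j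
       + kron i l * kron i' k * kron j' j + kron j l * kron i' k * kron j' i
       - (4/3) * kron i' j' * kron i k * kron j l
       - (4/3) * kron i j * kron i' k * kron j' l
       + (4/9) * kron i j * kron i' j' * kron k l)

set_option maxHeartbeats 4000000 in
theorem stmt9 (L1 L2 L3 : ℝ) (hL1 : 0 < L1) (hL23 : 0 ≤ L2 + L3)
    (x : Fin 3 → Fin 3 → Fin 3 → ℝ) :
    (∑ l, ∑ k, ∑ i, ∑ j, ∑ i', ∑ j',
        Atilde L1 (L2 + L3) l k i j i' j' * x i j l * x i' j' k
      = L1 * (∑ i, ∑ j, ∑ l, (x i j l) ^ 2)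
        + (1/4) * (L2 + L3) *
            ∑ j, ((∑ i, x i j i) + (∑ i, x j i i) - (2/3 : ℝ) * ∑ i, x i i j) ^ 2)
    ∧ L1 * (∑ i, ∑ j, ∑ l, (x i j l) ^ 2)
        ≤ ∑ l, ∑ k, ∑ i, ∑ j, ∑ i', ∑ j',
            Atilde L1 (L2 + L3) l k i j i' j' * x i j l * x i' j' k := by
  have heq : (∑ l, ∑ k, ∑ i, ∑ j, ∑ i', ∑ j',
        Atilde L1 (L2 + L3) l k i j i' j' * x i j l * x i' j' k
      = L1 * (∑ i, ∑ j, ∑ l, (x i j l) ^ 2)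
        + (1/4) * (L2 + L3) *
            ∑ j, ((∑ i, x i j i) + (∑ i, x j i i) - (2/3 : ℝ) * ∑ i, x i i j) ^ 2) := by
    simp only [Atilde, kron, Fin.sum_univ_three, Fin.reduceEq, reduceIte, mul_one, mul_zero,
      zero_mul, one_mul, add_zero, zero_add, sub_zero, zero_sub, neg_zero]
    ring
  refine ⟨heq, ?_⟩
  rw [heq]
  have h2 : 0 ≤ (1/4) * (L2 + L3) *
      ∑ j, ((∑ i, x i j i) + (∑ i, x j i i) - (2/3 : ℝ) * ∑ i, x i i j) ^ 2 :=
    mul_nonneg (by positivity) (Finset.sum_nonneg fun j _ => sq_nonneg _)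
  linarith
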